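/- With the automata A₁, …, Aₙ as defined (six-state counting automata over Γ ∪ Σ, Γ = {a₁,…,aₙ}), the language Lₙ recognized by the parallel composition Aₙ ‖ ⋯ ‖ A₁ satisfies: Lₙ ⊆ (ΓΣ)^{2ⁿ−1} (every accepted word strictly alternates one event of Γ with one event of Σ, with 2ⁿ−1 such pairs), and the projection of Lₙ to Γ is a singleton (all accepted words have the same Γ-projection). -/

import Mathlib

/-- An NFA with marked states. -/
structure NFAm (Q E : Type) where
  δ : Q → E → Set Q
  I : Set Q
  F : Set Q

/-- Extended transition function on sets of states. -/
def NFAm.run {Q E : Type} (A : NFAm Q E) : List E → Set Q → Set Q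
  | [], S => S
  | a :: w, S => A.run w {q | ∃ p ∈ S, q ∈ A.δ p a}

/-- The language recognized (marked) by the automaton. -/
def NFAm.Lm {Q E : Type} (A : NFAm Q E) : Set (List E) :=
  {w | (A.run w A.I ∩ A.F).Nonempty}

/-- Fully synchronous product of a family of NFAs over a common alphabet. -/
def prodN {n : ℕ} {E : Type} {Qs : Fin n → Type} (A : ∀ i, NFAm (Qs i) E) :
    NFAm (∀ i, Qs i) E where
  δ := fun p a => {q | ∀ i, q i ∈ (A i).δ (p i) a}
  I := {p | ∀ i, p i ∈ (A i).I}
  F := {p | ∀ i, p i ∈ (A i).F}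

/-- Natural projection of a word over `Σ ⊕ Γ` to `Σ` (erasing the `Γ`-events). -/
def projL {E F : Type} : List (E ⊕ F) → List E :=
  List.filterMap (Sum.elim some fun _ => none)

/-- Natural projection of a word over `Σ ⊕ Γ` to `Γ` (erasing the `Σ`-events). -/
def projR {E F : Type} : List (E ⊕ F) → List F :=
  List.filterMap (Sum.elim (fun _ => none) some)

/-- The six states of the counting automata `Aᵢ`. -/
inductive St : Type
  | z | o | p | q | r | s
  deriving DecidableEq

instance : Fintype St where
  elems := {St.z, St.o, St.p, St.q, St.r, St.s}
  complete := fun x => by cases x <;> simp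

/-- The six-state counting automaton `Aᵢ` (0-based index `i : Fin n`) over
`Sig ⊕ Fin n`, with `Sum.inr j` playing the role of `aⱼ`; `z` is the state `0`,
`o` is the state `1`, the initial state is `0` and the marked state is `1`. -/
def Acount {Sig : Type} (n : ℕ) (i : Fin n) : NFAm St (Sig ⊕ Fin n) where
  δ := fun st e =>
    match st, e with
    | .z, .inr j => if j < i then {St.p} else if j = i then {St.r} else ∅
    | .p, .inl _ => {St.z}
    | .o, .inr j => if j < i then {St.q} else if i < j then {St.s} else ∅
    | .q, .inl _ => {St.o}
    | .r, .inl _ => {St.o}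
    | .s, .inl _ => {St.z}
    | _, _ => ∅
  I := {St.z}
  F := {St.o}

/-!
The product `Aₙ ‖ ⋯ ‖ A₁` is an `n`-bit binary counter. In a configuration where every
component is in `0` or `1` (a bit vector `b`, bit `i` set iff `Aᵢ` is in `1`), no `Σ`-event is
possible, and `aⱼ` is possible only if `j` is the lowest zero bit of `b`; it leads to a
configuration in which only `Σ`-events are possible, and any `σ ∈ Σ` then yields the bit vector
`b + 1`. Acceptance means reaching all ones, so an accepted word consists of exactly `2ⁿ - 1`
increments `aⱼ σ` starting from `0`, and its `Γ`-letters are forced by the counter.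
-/

namespace NFAm

variable {Q E : Type} (A : NFAm Q E)

@[simp]
lemma run_nil (S : Set Q) : A.run [] S = S := rfl

lemma run_cons_singleton (a : E) (w : List E) (p : Q) :
    A.run (a :: w) {p} = A.run w (A.δ p a) := by
  simp [run]

@[simp]
lemma run_empty : ∀ w : List E, A.run w ∅ = ∅
  | [] => rfl
  | a :: w => by simpa [run] using run_empty w

end NFAm

section Product

variable {n : ℕ} {E : Type} {Qs : Fin n → Type} (A : ∀ i, NFAm (Qs i) E)

lemma prodN_δ (p : ∀ i, Qs i) (a : E) :
    (prodN A).δ p a = Set.univ.pi fun i => (A i).δ (p i) a := by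
  ext; simp [prodN]

lemma prodN_I : (prodN A).I = Set.univ.pi fun i => (A i).I := by
  ext; simp [prodN]

lemma prodN_F : (prodN A).F = Set.univ.pi fun i => (A i).F := by
  ext; simp [prodN]

end Product

namespace CountingAutomaton

variable {Sig : Type} {n : ℕ}

abbrev counterNFA (Sig : Type) (n : ℕ) : NFAm (Fin n → St) (Sig ⊕ Fin n) :=
  prodN fun i : Fin n => Acount (Sig := Sig) n i

def stableConfig (b : Fin n → Bool) : Fin n → St :=
  fun i => if b i then .o else .z

/-- The configuration reached from `stableConfig b` by the event `aⱼ`. -/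
def carryConfig (b : Fin n → Bool) (j : Fin n) : Fin n → St :=
  fun i => if i < j then .s else if i = j then .r else if b i then .q else .p

def IsLowestZero (b : Fin n → Bool) (j : Fin n) : Prop :=
  (∀ i < j, b i = true) ∧ b j = false

/-- `b + 1` in binary (least significant bit first), when `j` is the lowest zero bit of `b`. -/
def succBits (b : Fin n → Bool) (j : Fin n) : Fin n → Bool :=
  fun i => if i < j then false else if i = j then true else b i

def bitsValue (b : Fin n → Bool) : ℕ :=
  ∑ i, if b i then 2 ^ (i : ℕ) else 0

def AcceptsFrom (b : Fin n → Bool) (w : List (Sig ⊕ Fin n)) : Prop :=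
  ((counterNFA Sig n).run w {stableConfig b} ∩ (counterNFA Sig n).F).Nonempty

lemma IsLowestZero.unique {b : Fin n → Bool} {j j' : Fin n}
    (h : IsLowestZero b j) (h' : IsLowestZero b j') : j = j' := by
  by_contra hne
  rcases lt_or_gt_of_ne hne with hlt | hlt
  · exact absurd (h'.1 j hlt) (by simp [h.2])
  · exact absurd (h.1 j' hlt) (by simp [h'.2])

lemma exists_isLowestZero {b : Fin n → Bool} (h : ¬ ∀ i, b i = true) :
    ∃ j, IsLowestZero b j := by
  obtain ⟨i, hi⟩ : ∃ i, b i = false := by simpa using h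
  obtain ⟨j, hj, hmin⟩ := wellFounded_lt.has_min {i | b i = false} ⟨i, hi⟩
  exact ⟨j, fun i hi => by simpa using fun hbi => hmin i hbi hi, hj⟩

section Transitions

variable {b : Fin n → Bool} {j : Fin n}

lemma acount_δ_stableConfig_inr (h : IsLowestZero b j) (i : Fin n) :
    (Acount (Sig := Sig) n i).δ (stableConfig b i) (.inr j) = {carryConfig b j i} := by
  rcases lt_trichotomy i j with hij | rfl | hij
  · simp [Acount, stableConfig, carryConfig, h.1 i hij, hij, hij.not_gt]
  · simp [Acount, stableConfig, carryConfig, h.2]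
  · cases hb : b i <;> simp [Acount, stableConfig, carryConfig, hb, hij, hij.not_gt, hij.ne']

lemma acount_δ_stableConfig_inr_eq_empty (h : ¬ IsLowestZero b j) :
    ∃ i, (Acount (Sig := Sig) n i).δ (stableConfig b i) (.inr j) = ∅ := by
  by_cases hbj : b j = false
  · obtain ⟨i, hij, hbi⟩ : ∃ i < j, b i = false := by
      simpa [IsLowestZero, hbj] using h
    exact ⟨i, by simp [Acount, stableConfig, hbi, hij.not_gt, hij.ne']⟩
  · exact ⟨j, by simp [Acount, stableConfig, hbj]⟩

lemma acount_δ_carryConfig_inl (σ : Sig) (i : Fin n) :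
    (Acount (Sig := Sig) n i).δ (carryConfig b j i) (.inl σ) = {stableConfig (succBits b j) i} := by
  rcases lt_trichotomy i j with hij | rfl | hij
  · simp [Acount, stableConfig, carryConfig, succBits, hij]
  · simp [Acount, stableConfig, carryConfig, succBits]
  · cases hb : b i <;>
      simp [Acount, stableConfig, carryConfig, succBits, hb, hij.not_gt, hij.ne']

lemma acount_δ_stableConfig_inl (σ : Sig) (i : Fin n) :
    (Acount (Sig := Sig) n i).δ (stableConfig b i) (.inl σ) = ∅ := by
  cases hb : b i <;> simp [Acount, stableConfig, hb]

lemma acount_δ_carryConfig_inr (j' : Fin n) :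
    (Acount (Sig := Sig) n j).δ (carryConfig b j j) (.inr j') = ∅ := by
  simp [Acount, carryConfig]

lemma δ_stableConfig_inr (h : IsLowestZero b j) :
    (counterNFA Sig n).δ (stableConfig b) (.inr j) = {carryConfig b j} := by
  rw [prodN_δ]
  simp_rw [acount_δ_stableConfig_inr h]
  exact Set.univ_pi_singleton _

lemma δ_stableConfig_inr_of_not (h : ¬ IsLowestZero b j) :
    (counterNFA Sig n).δ (stableConfig b) (.inr j) = ∅ :=
  (prodN_δ _ _ _).trans (Set.univ_pi_eq_empty_iff.2 (acount_δ_stableConfig_inr_eq_empty h))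

lemma δ_carryConfig_inl (σ : Sig) :
    (counterNFA Sig n).δ (carryConfig b j) (.inl σ) = {stableConfig (succBits b j)} := by
  rw [prodN_δ]
  simp_rw [acount_δ_carryConfig_inl σ]
  exact Set.univ_pi_singleton _

lemma δ_stableConfig_inl (hn : 0 < n) (σ : Sig) :
    (counterNFA Sig n).δ (stableConfig b) (.inl σ) = ∅ :=
  (prodN_δ _ _ _).trans (Set.univ_pi_eq_empty (i := ⟨0, hn⟩) (acount_δ_stableConfig_inl σ _))

lemma δ_carryConfig_inr (j' : Fin n) :
    (counterNFA Sig n).δ (carryConfig b j) (.inr j') = ∅ :=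
  (prodN_δ _ _ _).trans (Set.univ_pi_eq_empty (i := j) (acount_δ_carryConfig_inr j'))

end Transitions

lemma counterNFA_I : (counterNFA Sig n).I = {stableConfig fun _ => false} := by
  rw [prodN_I, ← Set.univ_pi_singleton]
  rfl

lemma stableConfig_mem_F_iff {b : Fin n → Bool} :
    stableConfig b ∈ (counterNFA Sig n).F ↔ ∀ i, b i = true := by
  simp only [prodN_F, Set.mem_univ_pi]
  refine forall_congr' fun i => ?_
  cases hb : b i <;> simp [Acount, stableConfig, hb]

lemma carryConfig_notMem_F (b : Fin n → Bool) (j : Fin n) :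
    carryConfig b j ∉ (counterNFA Sig n).F := by
  simp only [prodN_F, Set.mem_univ_pi, not_forall]
  exact ⟨j, by simp [Acount, carryConfig]⟩

section Acceptance

variable {b : Fin n → Bool} {j : Fin n}

lemma acceptsFrom_nil : AcceptsFrom (Sig := Sig) b [] ↔ ∀ i, b i = true := by
  simp [AcceptsFrom, stableConfig_mem_F_iff]

lemma not_acceptsFrom_inl (hn : 0 < n) (σ : Sig) (w : List (Sig ⊕ Fin n)) :
    ¬ AcceptsFrom b (.inl σ :: w) := by
  simp [AcceptsFrom, NFAm.run_cons_singleton, δ_stableConfig_inl hn]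

lemma isLowestZero_of_acceptsFrom_inr {w : List (Sig ⊕ Fin n)}
    (hw : AcceptsFrom b (.inr j :: w)) : IsLowestZero b j := by
  by_contra h
  simp [AcceptsFrom, NFAm.run_cons_singleton, δ_stableConfig_inr_of_not h] at hw

lemma run_inr_inl (h : IsLowestZero b j) (σ : Sig) (w : List (Sig ⊕ Fin n)) :
    (counterNFA Sig n).run (.inr j :: .inl σ :: w) {stableConfig b} =
      (counterNFA Sig n).run w {stableConfig (succBits b j)} := by
  rw [NFAm.run_cons_singleton, δ_stableConfig_inr h, NFAm.run_cons_singleton, δ_carryConfig_inl]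

lemma acceptsFrom_inr_inl (σ : Sig) (w : List (Sig ⊕ Fin n)) :
    AcceptsFrom b (.inr j :: .inl σ :: w) ↔ IsLowestZero b j ∧ AcceptsFrom (succBits b j) w := by
  refine ⟨fun hw => ?_, fun ⟨h, hw⟩ => ?_⟩
  · have h := isLowestZero_of_acceptsFrom_inr hw
    exact ⟨h, by rwa [AcceptsFrom, run_inr_inl h] at hw⟩
  · rwa [AcceptsFrom, run_inr_inl h]

lemma AcceptsFrom.eq_nil_or_eq_cons (hn : 0 < n) {w : List (Sig ⊕ Fin n)}
    (hw : AcceptsFrom b w) :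
    (w = [] ∧ ∀ i, b i = true) ∨
      ∃ j σ w', w = .inr j :: .inl σ :: w' ∧ IsLowestZero b j ∧ AcceptsFrom (succBits b j) w' := by
  rcases w with _ | ⟨σ | j, _ | ⟨σ | j', w⟩⟩
  · exact .inl ⟨rfl, acceptsFrom_nil.1 hw⟩
  all_goals try exact absurd hw (not_acceptsFrom_inl hn _ _)
  · have h := isLowestZero_of_acceptsFrom_inr hw
    simp [AcceptsFrom, NFAm.run_cons_singleton, δ_stableConfig_inr h, carryConfig_notMem_F] at hw
  · exact .inr ⟨j, σ, w, rfl, (acceptsFrom_inr_inl σ w).1 hw⟩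
  · have h := isLowestZero_of_acceptsFrom_inr hw
    simp [AcceptsFrom, NFAm.run_cons_singleton, δ_stableConfig_inr h, δ_carryConfig_inr] at hw

lemma AcceptsFrom.eq_nil (hn : 0 < n) (hb : ∀ i, b i = true) {w : List (Sig ⊕ Fin n)}
    (hw : AcceptsFrom b w) : w = [] := by
  rcases hw.eq_nil_or_eq_cons hn with ⟨rfl, -⟩ | ⟨j, -, -, -, h, -⟩
  · rfl
  · exact absurd h.2 (by simp [hb j])

lemma AcceptsFrom.eq_cons (hn : 0 < n) (hb : ¬ ∀ i, b i = true) {w : List (Sig ⊕ Fin n)}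
    (hw : AcceptsFrom b w) :
    ∃ j σ w', w = .inr j :: .inl σ :: w' ∧ IsLowestZero b j ∧ AcceptsFrom (succBits b j) w' :=
  (hw.eq_nil_or_eq_cons hn).resolve_left fun h => hb h.2

end Acceptance

lemma mem_Lm_iff (w : List (Sig ⊕ Fin n)) :
    w ∈ (counterNFA Sig n).Lm ↔ AcceptsFrom (fun _ => false) w := by
  rw [NFAm.Lm, counterNFA_I]
  rfl

lemma sum_two_pow_fin (n : ℕ) : ∑ i : Fin n, 2 ^ (i : ℕ) = 2 ^ n - 1 := by
  rw [Fin.sum_univ_eq_sum_range (2 ^ ·), Nat.geomSum_eq le_rfl]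
  simp

lemma sum_two_pow_fin_lt (j : Fin n) :
    ∑ i : Fin n, (if i < j then 2 ^ (i : ℕ) else 0) = 2 ^ (j : ℕ) - 1 := by
  have := Finset.sum_map (Finset.Iio j) Fin.valEmbedding (2 ^ ·)
  rw [Fin.map_valEmbedding_Iio, Nat.Iio_eq_range, Nat.geomSum_eq le_rfl] at this
  rw [← Finset.sum_filter, Finset.filter_gt_eq_Iio]
  simpa using this.symm

lemma bitsValue_false : bitsValue (fun _ : Fin n => false) = 0 := by
  simp [bitsValue]

lemma bitsValue_eq_iff {b : Fin n → Bool} : bitsValue b = 2 ^ n - 1 ↔ ∀ i, b i = true := by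
  rw [← sum_two_pow_fin, bitsValue, Finset.sum_eq_sum_iff_of_le fun i _ => by split <;> simp]
  refine forall_congr' fun i => ?_
  cases b i <;> simp [eq_comm (a := 0)]

lemma bitsValue_succBits {b : Fin n → Bool} {j : Fin n} (h : IsLowestZero b j) :
    bitsValue (succBits b j) = bitsValue b + 1 := by
  have pointwise (i : Fin n) :
      (if succBits b j i then 2 ^ (i : ℕ) else 0) + (if i < j then 2 ^ (i : ℕ) else 0) =
        (if b i then 2 ^ (i : ℕ) else 0) + (if i = j then 2 ^ (i : ℕ) else 0) := by
    rcases lt_trichotomy i j with hij | rfl | hij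
    · simp [succBits, hij, hij.ne, h.1 i hij]
    · simp [succBits, h.2]
    · simp [succBits, hij.not_gt, hij.ne']
  have total := Finset.sum_congr rfl fun i (_ : i ∈ Finset.univ) => pointwise i
  rw [Finset.sum_add_distrib, Finset.sum_add_distrib, sum_two_pow_fin_lt,
    Finset.sum_ite_eq'] at total
  simp only [Finset.mem_univ, if_true] at total
  have : 1 ≤ 2 ^ (j : ℕ) := Nat.one_le_two_pow
  unfold bitsValue
  omega

lemma AcceptsFrom.exists_pairs (hn : 0 < n) {k : ℕ} {b : Fin n → Bool} {w : List (Sig ⊕ Fin n)}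
    (hk : bitsValue b + k = 2 ^ n - 1) (hw : AcceptsFrom b w) :
    ∃ l : List (Fin n × Sig), l.length = k ∧
      w = (l.map fun pr => [Sum.inr pr.1, Sum.inl pr.2]).flatten := by
  induction k generalizing b w with
  | zero => exact ⟨[], rfl, hw.eq_nil hn (bitsValue_eq_iff.1 hk)⟩
  | succ k ih =>
    have hb : ¬ ∀ i, b i = true := fun hb => by have := bitsValue_eq_iff.2 hb; omega
    obtain ⟨j, σ, w', rfl, h, hw'⟩ := hw.eq_cons hn hb
    obtain ⟨l, hl, rfl⟩ := ih (by rw [bitsValue_succBits h]; omega) hw'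
    exact ⟨(j, σ) :: l, by simp [hl], rfl⟩

lemma AcceptsFrom.projR_eq (hn : 0 < n) {k : ℕ} {b : Fin n → Bool} {w w' : List (Sig ⊕ Fin n)}
    (hk : bitsValue b + k = 2 ^ n - 1) (hw : AcceptsFrom b w) (hw' : AcceptsFrom b w') :
    projR w = projR w' := by
  induction k generalizing b w w' with
  | zero => rw [hw.eq_nil hn (bitsValue_eq_iff.1 hk), hw'.eq_nil hn (bitsValue_eq_iff.1 hk)]
  | succ k ih =>
    have hb : ¬ ∀ i, b i = true := fun hb => by have := bitsValue_eq_iff.2 hb; omega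
    obtain ⟨j, σ, v, rfl, h, hv⟩ := hw.eq_cons hn hb
    obtain ⟨j', σ', v', rfl, h', hv'⟩ := hw'.eq_cons hn hb
    obtain rfl := h.unique h'
    have hk' : bitsValue (succBits b j) + k = 2 ^ n - 1 := by rw [bitsValue_succBits h]; omega
    change j :: projR v = j :: projR v'
    rw [ih hk' hv hv']

lemma exists_acceptsFrom (σ : Sig) {k : ℕ} {b : Fin n → Bool} (hk : bitsValue b + k = 2 ^ n - 1) :
    ∃ w : List (Sig ⊕ Fin n), AcceptsFrom b w := by
  induction k generalizing b with
  | zero => exact ⟨[], acceptsFrom_nil.2 (bitsValue_eq_iff.1 hk)⟩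
  | succ k ih =>
    obtain ⟨j, h⟩ := exists_isLowestZero (b := b) fun hb => by have := bitsValue_eq_iff.2 hb; omega
    obtain ⟨w, hw⟩ := ih (b := succBits b j) (by rw [bitsValue_succBits h]; omega)
    exact ⟨.inr j :: .inl σ :: w, (acceptsFrom_inr_inl σ w).2 ⟨h, hw⟩⟩

end CountingAutomaton

open CountingAutomaton in
theorem counting_automata_language_shape_general {Sig : Type} [Nonempty Sig]
    (n : ℕ) (hn : 1 ≤ n) :
    (∀ w ∈ (prodN (fun i : Fin n => Acount (Sig := Sig) n i)).Lm,
      ∃ l : List (Fin n × Sig), l.length = 2 ^ n - 1 ∧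
        w = (l.map fun pr => [Sum.inr pr.1, Sum.inl pr.2]).flatten) ∧
    (∃ u : List (Fin n),
      projR '' (prodN (fun i : Fin n => Acount (Sig := Sig) n i)).Lm = {u}) := by
  have start : bitsValue (fun _ : Fin n => false) + (2 ^ n - 1) = 2 ^ n - 1 := by
    rw [bitsValue_false, zero_add]
  refine ⟨fun w hw => ((mem_Lm_iff w).1 hw).exists_pairs hn start, ?_⟩
  obtain ⟨w₀, hw₀⟩ := exists_acceptsFrom (Classical.arbitrary Sig) start
  refine ⟨projR w₀, Set.eq_singleton_iff_unique_mem.2 ⟨⟨w₀, (mem_Lm_iff w₀).2 hw₀, rfl⟩, ?_⟩⟩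
  rintro _ ⟨w, hw, rfl⟩
  exact ((mem_Lm_iff w).1 hw).projR_eq hn start hw₀

/-- the language `Lₙ` recognized by `Aₙ ‖ ⋯ ‖ A₁` is contained in
`(ΓΣ)^{2ⁿ-1}` (accepted words strictly alternate a `Γ`-event with a `Σ`-event,
with `2ⁿ - 1` such pairs), and the projection of `Lₙ` to `Γ` is a singleton. -/
theorem counting_automata_language_shape {Sig : Type} [Fintype Sig] [Nonempty Sig]
    (n : ℕ) (hn : 1 ≤ n) :
    (∀ w ∈ (prodN (fun i : Fin n => Acount (Sig := Sig) n i)).Lm,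
      ∃ l : List (Fin n × Sig), l.length = 2 ^ n - 1 ∧
        w = (l.map fun pr => [Sum.inr pr.1, Sum.inl pr.2]).flatten) ∧
    (∃ u : List (Fin n),
      projR '' (prodN (fun i : Fin n => Acount (Sig := Sig) n i)).Lm = {u}) :=
  counting_automata_language_shape_general n hn
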